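/- arXiv:2009.07666 — 3 statements merged into one kernel-verified Lean document; each statement's English description precedes it below -/
import Mathlib

section
/- Let q be an odd prime power. In SL(3, F_q), the subgroup S = ⟨u, v, t, a⟩, where u = diag(1,-1,-1), v = diag(-1,1,-1), t has rows (1,0,0),(0,0,1),(0,-1,0), and a has rows (0,1,0),(0,0,1),(1,0,0), is isomorphic to the symmetric group S₄; moreover Q = ⟨u,v⟩ is normal in S and S/Q ≅ S₃. -/
/-!
Label by `Fin 4` the vertices `(1,1,1), (1,-1,-1), (-1,1,-1), (-1,-1,1)` of a regular tetrahedron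
inscribed in the cube `[-1,1]³`. For `σ ∈ S₄`, the linear map permuting the vertices as `σ` does,
multiplied by `sign σ`, is a rotation of the cube; this gives a homomorphism `S₄ → SL(3, F)`, which
is injective because no vertex is `±` another one when `2 ≠ 0`. It sends `(01)(23)`, `(02)(13)`,
`(0312)`, `(132)` to `u`, `v`, `t`, `a`, and the last two generate `S₄`, so `S` is its image.
The quotient map `S₄ → S₃` is the action on the three ways of splitting the vertices into two pairs;
its kernel `{1, (01)(23), (02)(13), (03)(12)}` is mapped onto `Q`.
-/

open Equiv Equiv.Perm Subgroup Matrix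

theorem Matrix.mul_submatrix_id {l m n o α : Type*} [Fintype m] [Mul α] [AddCommMonoid α]
    (M : Matrix l m α) (N : Matrix m n α) (e : o → n) :
    M * N.submatrix id e = (M * N).submatrix id e := by
  rw [submatrix_mul M N id id e Function.bijective_id, submatrix_id_id]

theorem MonoidHom.ker_comp_ofInjective_symm {G H M : Type*} [Group G] [Group H] [Group M]
    {f : G →* H} (hf : Function.Injective f) (π : G →* M) :
    (π.comp (MonoidHom.ofInjective hf).symm.toMonoidHom).ker = (π.ker.map f).subgroupOf f.range := by
  ext x
  rw [mem_subgroupOf, ← MonoidHom.apply_ofInjective_symm hf x, mem_map_iff_mem hf]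
  rfl

section Tetrahedron

variable (F : Type*) [Field F]

/-- Its columns are the vertices of a regular tetrahedron inscribed in the cube `[-1,1]³`. -/
def tetrahedron : Matrix (Fin 3) (Fin 4) F := !![1, 1, -1, -1; 1, -1, 1, -1; 1, -1, -1, 1]

theorem tetrahedron_mul_transpose : tetrahedron F * (tetrahedron F)ᵀ = (4 : F) • 1 := by
  ext i j
  fin_cases i <;> fin_cases j <;> simp [tetrahedron, Matrix.mul_apply, Fin.sum_univ_four] <;> norm_num

theorem transpose_tetrahedron_mul :
    (tetrahedron F)ᵀ * tetrahedron F = (4 : F) • 1 - vecMulVec 1 1 := by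
  ext i j
  fin_cases i <;> fin_cases j <;> simp [tetrahedron, Matrix.mul_apply, Fin.sum_univ_three] <;> norm_num

theorem tetrahedron_mulVec_one : tetrahedron F *ᵥ 1 = 0 := by
  ext i
  fin_cases i <;> simp [tetrahedron, mulVec, dotProduct, Fin.sum_univ_four]

/-- Four times the linear map sending vertex `i` of the tetrahedron to vertex `σ i`. -/
def vertexMap (σ : Perm (Fin 4)) : Matrix (Fin 3) (Fin 3) F :=
  (tetrahedron F).submatrix id σ * (tetrahedron F)ᵀ

variable {F}

theorem mul_transpose_tetrahedron_mul_tetrahedron {m : Type*} {N : Matrix m (Fin 4) F}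
    (hN : N *ᵥ 1 = 0) : N * ((tetrahedron F)ᵀ * tetrahedron F) = (4 : F) • N := by
  rw [transpose_tetrahedron_mul, Matrix.mul_sub, mul_vecMulVec, hN, zero_vecMulVec, sub_zero,
    Matrix.mul_smul, Matrix.mul_one]

theorem vertexMap_mul_tetrahedron (σ : Perm (Fin 4)) :
    vertexMap F σ * tetrahedron F = (4 : F) • (tetrahedron F).submatrix id σ := by
  refine (Matrix.mul_assoc _ _ _).trans (mul_transpose_tetrahedron_mul_tetrahedron ?_)
  rw [submatrix_mulVec_equiv]
  simp [tetrahedron_mulVec_one]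

theorem vertexMap_mul (σ τ : Perm (Fin 4)) :
    vertexMap F σ * vertexMap F τ = (4 : F) • vertexMap F (σ * τ) := by
  rw [vertexMap, vertexMap, ← Matrix.mul_assoc, mul_submatrix_id, ← vertexMap,
    vertexMap_mul_tetrahedron, vertexMap, ← Matrix.smul_mul]
  rfl

theorem four_ne_zero_of_two_ne_zero (h2 : (2 : F) ≠ 0) : (4 : F) ≠ 0 := by
  rw [show (4 : F) = 2 * 2 by norm_num]
  exact mul_ne_zero h2 h2

def cubeRotation (h2 : (2 : F) ≠ 0) : Perm (Fin 4) →* Matrix (Fin 3) (Fin 3) F where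
  toFun σ := ((sign σ : ℤ) / 4 : F) • vertexMap F σ
  map_one' := by
    simp [vertexMap, tetrahedron_mul_transpose, smul_smul, four_ne_zero_of_two_ne_zero h2]
  map_mul' σ τ := by
    have h4 := four_ne_zero_of_two_ne_zero h2
    rw [smul_mul_smul_comm, vertexMap_mul, smul_smul, Perm.sign_mul]
    congr 1
    push_cast
    field_simp

section
variable (h2 : (2 : F) ≠ 0)

theorem cubeRotation_apply (σ : Perm (Fin 4)) :
    cubeRotation h2 σ = ((sign σ : ℤ) / 4 : F) • vertexMap F σ := rfl

theorem cubeRotation_mul_tetrahedron (σ : Perm (Fin 4)) :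
    cubeRotation h2 σ * tetrahedron F = ((sign σ : ℤ) : F) • (tetrahedron F).submatrix id σ := by
  rw [cubeRotation_apply, Matrix.smul_mul, vertexMap_mul_tetrahedron, smul_smul,
    div_mul_cancel₀ _ (four_ne_zero_of_two_ne_zero h2)]

theorem cubeRotation_eq_of_mul_tetrahedron {σ : Perm (Fin 4)} {M : Matrix (Fin 3) (Fin 3) F}
    (hM : M * tetrahedron F = ((sign σ : ℤ) : F) • (tetrahedron F).submatrix id σ) :
    cubeRotation h2 σ = M := by
  calc cubeRotation h2 σ = (4⁻¹ : F) • (M * tetrahedron F * (tetrahedron F)ᵀ) := by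
        rw [hM, cubeRotation_apply, vertexMap, Matrix.smul_mul, smul_smul, div_eq_inv_mul]
    _ = M := by
        rw [Matrix.mul_assoc, tetrahedron_mul_transpose, Matrix.mul_smul, Matrix.mul_one,
          smul_smul, inv_mul_cancel₀ (four_ne_zero_of_two_ne_zero h2), one_smul]

include h2 in
theorem eq_of_tetrahedron_col_eq_smul {s : F} (hs : s = 1 ∨ s = -1) {i k : Fin 4}
    (h : ∀ j, tetrahedron F j i = s * tetrahedron F j k) : i = k := by
  have hne : (1 : F) ≠ -1 := fun h => h2 (by linear_combination h)
  have h0 := h 0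
  have h1 := h 1
  have h2' := h 2
  rcases hs with rfl | rfl <;> fin_cases i <;> fin_cases k <;>
    simp [tetrahedron, hne, hne.symm] at h0 h1 h2' ⊢

theorem cubeRotation_injective : Function.Injective (cubeRotation h2) := by
  refine (injective_iff_map_eq_one _).2 fun σ hσ => Equiv.ext fun i => ?_
  have hT := cubeRotation_mul_tetrahedron h2 σ
  rw [hσ, Matrix.one_mul] at hT
  refine (eq_of_tetrahedron_col_eq_smul h2 ?_ fun j => congrFun (congrFun hT j) i).symm
  rcases Int.units_eq_one_or (sign σ) with h | h <;> simp [h]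

end

end Tetrahedron

def permU : Perm (Fin 4) := swap 0 1 * swap 2 3
def permV : Perm (Fin 4) := swap 0 2 * swap 1 3
def permT : Perm (Fin 4) := List.formPerm [0, 3, 1, 2]
def permA : Perm (Fin 4) := List.formPerm [1, 3, 2]

theorem closure_permT_permA : closure {permT, permA} = ⊤ := by
  have hcycle : permT.IsCycle := List.isCycle_formPerm (by decide) (by decide)
  rw [eq_top_iff, ← closure_cycle_adjacent_swap hcycle (by decide) 0, closure_le]
  rintro _ (rfl | rfl)
  · exact subset_closure (by simp)
  · rw [show swap 0 (permT 0) = permT * permA by decide]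
    exact mul_mem (subset_closure (by simp)) (subset_closure (by simp))

section
variable {F : Type*} [Field F] (h2 : (2 : F) ≠ 0)

theorem cubeRotation_permU : cubeRotation h2 permU = !![1, 0, 0; 0, -1, 0; 0, 0, -1] := by
  refine cubeRotation_eq_of_mul_tetrahedron h2 ?_
  ext i j
  fin_cases i <;> fin_cases j <;>
    simp [permU, tetrahedron, Perm.sign_mul, swap_apply_def]

theorem cubeRotation_permV : cubeRotation h2 permV = !![-1, 0, 0; 0, 1, 0; 0, 0, -1] := by
  refine cubeRotation_eq_of_mul_tetrahedron h2 ?_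
  ext i j
  fin_cases i <;> fin_cases j <;>
    simp [permV, tetrahedron, Perm.sign_mul, swap_apply_def]

theorem cubeRotation_permT : cubeRotation h2 permT = !![1, 0, 0; 0, 0, 1; 0, -1, 0] := by
  refine cubeRotation_eq_of_mul_tetrahedron h2 ?_
  ext i j
  fin_cases i <;> fin_cases j <;>
    simp [permT, tetrahedron, Perm.sign_mul, swap_apply_def]

theorem cubeRotation_permA : cubeRotation h2 permA = !![0, 1, 0; 0, 0, 1; 1, 0, 0] := by
  refine cubeRotation_eq_of_mul_tetrahedron h2 ?_
  ext i j
  fin_cases i <;> fin_cases j <;>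
    simp [permA, tetrahedron, Perm.sign_mul, swap_apply_def]

theorem det_cubeRotation (σ : Perm (Fin 4)) : (cubeRotation h2 σ).det = 1 := by
  have : detMonoidHom.comp (cubeRotation h2) = 1 := by
    refine MonoidHom.eq_of_eqOn_dense closure_permT_permA ?_
    rintro _ (rfl | rfl) <;> simp [cubeRotation_permT, cubeRotation_permA, det_fin_three]
  exact DFunLike.congr_fun this σ

def cubeRotationSL : Perm (Fin 4) →* SpecialLinearGroup (Fin 3) F where
  toFun σ := ⟨cubeRotation h2 σ, det_cubeRotation h2 σ⟩
  map_one' := Subtype.ext (map_one _)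
  map_mul' σ τ := Subtype.ext (map_mul _ σ τ)

theorem cubeRotationSL_injective : Function.Injective (cubeRotationSL h2) :=
  fun _ _ h => cubeRotation_injective h2 (congrArg Subtype.val h)

end

/-- The partitions of `Fin 4` into two pairs are indexed by `Fin 3`, partition `k` pairing `0` with
`k + 1`; `pairing i j` is the partition in which `i` is paired with `j` (junk when `i = j`). -/
def pairing (i j : Fin 4) : Fin 3 :=
  ![![0, 0, 1, 2], ![0, 0, 2, 1], ![1, 2, 0, 0], ![2, 1, 0, 0]] i j

def pairingAction (σ : Perm (Fin 4)) (k : Fin 3) : Fin 3 := pairing (σ 0) (σ k.succ)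

theorem pairing_apply_apply (σ : Perm (Fin 4)) {i j : Fin 4} (hij : i ≠ j) :
    pairing (σ i) (σ j) = pairingAction σ (pairing i j) := by
  revert σ i j
  decide +kernel

theorem pairingAction_one (k : Fin 3) : pairingAction 1 k = k := by
  revert k
  decide

theorem pairingAction_mul (σ τ : Perm (Fin 4)) (k : Fin 3) :
    pairingAction (σ * τ) k = pairingAction σ (pairingAction τ k) :=
  pairing_apply_apply σ (τ.injective.ne (Fin.succ_ne_zero k).symm)

def pairingPerm : Perm (Fin 4) →* Perm (Fin 3) where
  toFun σ :=
    { toFun := pairingAction σ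
      invFun := pairingAction σ⁻¹
      left_inv k := by rw [← pairingAction_mul, inv_mul_cancel, pairingAction_one]
      right_inv k := by rw [← pairingAction_mul, mul_inv_cancel, pairingAction_one] }
  map_one' := Equiv.ext pairingAction_one
  map_mul' σ τ := Equiv.ext (pairingAction_mul σ τ)

theorem pairingPerm_surjective : Function.Surjective pairingPerm := by
  have : ∀ π : Perm (Fin 3), ∃ σ : Perm (Fin 4), ∀ k, pairingAction σ k = π k := by decide
  intro π
  obtain ⟨σ, hσ⟩ := this π
  exact ⟨σ, Equiv.ext hσ⟩

theorem ker_pairingPerm : pairingPerm.ker = closure {permU, permV} := by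
  refine le_antisymm (fun σ hσ => ?_) ((closure_le _).2 ?_)
  · have hker : ∀ σ : Perm (Fin 4), (∀ k, pairingAction σ k = k) →
        σ = 1 ∨ σ = permU ∨ σ = permV ∨ σ = permU * permV := by decide
    have hu : permU ∈ closure {permU, permV} := subset_closure (by simp)
    have hv : permV ∈ closure {permU, permV} := subset_closure (by simp)
    rcases hker σ (fun k => congrArg (· k) hσ) with rfl | rfl | rfl | rfl
    exacts [one_mem _, hu, hv, mul_mem hu hv]
  · rintro _ (rfl | rfl) <;> exact Equiv.ext (by decide)

/-- S = ⟨u,v,t,a⟩ ≅ S₄, Q = ⟨u,v⟩ is normal in S, and S/Q ≅ S₃ (expressed via a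
surjective homomorphism S → S₃ with kernel Q). -/
theorem stmt_7 (F : Type) [Field F] [Fintype F] (hq : Odd (Fintype.card F))
    (u v t a : Matrix.SpecialLinearGroup (Fin 3) F)
    (hu : (u : Matrix (Fin 3) (Fin 3) F) = !![1,0,0; 0,-1,0; 0,0,-1])
    (hv : (v : Matrix (Fin 3) (Fin 3) F) = !![-1,0,0; 0,1,0; 0,0,-1])
    (ht : (t : Matrix (Fin 3) (Fin 3) F) = !![1,0,0; 0,0,1; 0,-1,0])
    (ha : (a : Matrix (Fin 3) (Fin 3) F) = !![0,1,0; 0,0,1; 1,0,0]) :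
    Nonempty ((Subgroup.closure {u, v, t, a} :
        Subgroup (Matrix.SpecialLinearGroup (Fin 3) F)) ≃* Equiv.Perm (Fin 4)) ∧
    (Subgroup.closure {u, v} : Subgroup (Matrix.SpecialLinearGroup (Fin 3) F)) ≤
      Subgroup.closure {u, v, t, a} ∧
    ((Subgroup.closure {u, v}).subgroupOf (Subgroup.closure {u, v, t, a})).Normal ∧
    ∃ φ : (Subgroup.closure {u, v, t, a} :
        Subgroup (Matrix.SpecialLinearGroup (Fin 3) F)) →* Equiv.Perm (Fin 3),
      Function.Surjective φ ∧
      φ.ker = (Subgroup.closure {u, v}).subgroupOf (Subgroup.closure {u, v, t, a}) := by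
  have h2 : (2 : F) ≠ 0 := Ring.two_ne_zero fun h => by
    have := FiniteField.even_card_iff_char_two.1 h
    rw [Nat.odd_iff] at hq
    omega
  set ρ := cubeRotationSL h2
  have hρu : ρ permU = u := Subtype.ext ((cubeRotation_permU h2).trans hu.symm)
  have hρv : ρ permV = v := Subtype.ext ((cubeRotation_permV h2).trans hv.symm)
  have hρt : ρ permT = t := Subtype.ext ((cubeRotation_permT h2).trans ht.symm)
  have hρa : ρ permA = a := Subtype.ext ((cubeRotation_permA h2).trans ha.symm)
  have hS : ρ.range = closure {u, v, t, a} := by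
    have htop : closure {permU, permV, permT, permA} = ⊤ :=
      eq_top_mono (closure_mono (by simp [Set.insert_subset_iff])) closure_permT_permA
    rw [MonoidHom.range_eq_map, ← htop, MonoidHom.map_closure]
    simp only [Set.image_insert_eq, Set.image_singleton, hρu, hρv, hρt, hρa]
  have hQ : pairingPerm.ker.map ρ = closure {u, v} := by
    rw [ker_pairingPerm, MonoidHom.map_closure]
    simp only [Set.image_insert_eq, Set.image_singleton, hρu, hρv]
  have hinj := cubeRotationSL_injective h2
  have hker := MonoidHom.ker_comp_ofInjective_symm hinj pairingPerm
  rw [← hS, ← hQ]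
  exact ⟨⟨(MonoidHom.ofInjective hinj).symm⟩, map_le_range _ _, hker ▸ MonoidHom.normal_ker _,
    _, pairingPerm_surjective.comp (MulEquiv.surjective _), hker⟩
end

section
/- The automorphism group of the semi-dihedral group SD_{2^m} of order 2^m (m ≥ 4) is a 2-group. -/
/-- The defining relators of the semi-dihedral group
⟨r, s | r^(2^(m-1)) = s² = 1, s r s = r^(2^(m-2) - 1)⟩, with r = of 0 and s = of 1. -/
def semidihedralRels (m : ℕ) : Set (FreeGroup (Fin 2)) :=
  {(FreeGroup.of 0) ^ (2 ^ (m - 1)),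
   (FreeGroup.of 1) ^ 2,
   FreeGroup.of 1 * FreeGroup.of 0 * FreeGroup.of 1 * ((FreeGroup.of 0)⁻¹) ^ (2 ^ (m - 2) - 1)}

/-- The semi-dihedral group of order 2^m, given by its presentation. -/
def SemidihedralGroup (m : ℕ) : Type := PresentedGroup (semidihedralRels m)

instance (m : ℕ) : Group (SemidihedralGroup m) :=
  inferInstanceAs (Group (PresentedGroup (semidihedralRels m)))

/-!
Let `G` be generated by `r` of order `2 ^ n` (`n ≥ 3`) and an involution `s ∉ ⟨r⟩` with
`s r s = r ^ k`, `k ≡ -1 mod 2 ^ (n - 1)`. Every element outside `⟨r⟩` is `r ^ a s` and squares to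
`r ^ (a (1 + k))`, so has order dividing `4`; hence an automorphism `φ` maps `r` to some `r ^ i`
of the same order, i.e. with `i` odd, and by Euler's theorem `φ ^ 2 ^ (n - 1)` fixes `r`.
An automorphism `ψ` fixing `r` sends `s` to some `r ^ u s`, so `ψ ^ t` sends `s` to `r ^ (t u) s`
and `ψ ^ 2 ^ n = 1`.

For `SD_{2^m}` take `n = m - 1`, `k = 2 ^ (m - 2) - 1`. That `r` has full order is seen in the
permutation representation `x ↦ x + 1`, `x ↦ k x` of `ZMod (2 ^ (m - 1))`, and `s ∉ ⟨r⟩` since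
otherwise `s` would commute with `r`, forcing `k ≡ 1`.
-/

open Subgroup

section MulAut

variable {G : Type*} [Group G]

lemma MulAut.pow_totient_orderOf_apply (φ : MulAut G) {x : G} {i : ℕ} (hi : φ x = x ^ i) :
    (φ ^ (orderOf x).totient) x = x := by
  have hpow (t : ℕ) : (φ ^ t) x = x ^ i ^ t := by
    induction t with
    | zero => simp
    | succ t ih => rw [pow_succ, MulAut.mul_apply, hi, map_pow, ih, ← pow_mul, pow_succ]
  rcases (orderOf x).eq_zero_or_pos with h0 | hpos
  · simp [h0]
  have hcop : (orderOf x).Coprime i := by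
    have := IsOfFinOrder.orderOf_pow x i (orderOf_pos_iff.1 hpos)
    rw [← hi, MulEquiv.orderOf_eq, eq_comm, Nat.div_eq_self] at this
    exact this.resolve_left hpos.ne'
  conv_rhs => rw [← pow_one x]
  rw [hpow, pow_eq_pow_iff_modEq]
  exact Nat.ModEq.pow_totient hcop.symm

lemma MulAut.eq_one_of_forall_apply_eq_self {S : Set G} (hS : closure S = ⊤) {ψ : MulAut G}
    (h : ∀ x ∈ S, ψ x = x) : ψ = 1 :=
  MulEquiv.ext fun x => DFunLike.congr_fun
    (MonoidHom.eq_of_eqOn_dense hS (f := ψ.toMonoidHom) (g := MonoidHom.id G) h) x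

end MulAut

section DihedralType

variable {G : Type*} [Group G] {r s : G} {k n : ℕ}

lemma mul_zpow_eq_zpow_mul (hs : s * s = 1) (hsrs : s * r * s = r ^ k) (a : ℤ) :
    s * r ^ a = r ^ (k * a) * s := by
  have hsr : SemiconjBy s r (r ^ k) := by
    rw [SemiconjBy, ← hsrs, mul_assoc, hs, mul_one]
  rw [zpow_mul, zpow_natCast]
  exact hsr.zpow_right a

lemma exists_eq_zpow_or_eq_zpow_mul (hgen : closure {r, s} = ⊤) (hs : s * s = 1)
    (hsrs : s * r * s = r ^ k) (g : G) : ∃ a : ℤ, g = r ^ a ∨ g = r ^ a * s := by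
  have hsa := mul_zpow_eq_zpow_mul hs hsrs
  have hg : g ∈ closure {r, s} := hgen ▸ mem_top g
  induction hg using closure_induction with
  | mem x hx =>
    rcases hx with rfl | rfl
    · exact ⟨1, .inl (zpow_one x).symm⟩
    · exact ⟨0, .inr (by simp)⟩
  | one => exact ⟨0, .inl (zpow_zero r).symm⟩
  | mul x y _ _ hx hy =>
    obtain ⟨a, rfl | rfl⟩ := hx <;> obtain ⟨b, rfl | rfl⟩ := hy
    · exact ⟨a + b, .inl (zpow_add r a b).symm⟩
    · exact ⟨a + b, .inr (by rw [zpow_add, mul_assoc])⟩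
    · exact ⟨a + k * b, .inr (by rw [zpow_add, mul_assoc, hsa, mul_assoc])⟩
    · exact ⟨a + k * b, .inl (by rw [zpow_add, mul_assoc, ← mul_assoc s, hsa, mul_assoc, hs,
        mul_one])⟩
  | inv x _ hx =>
    obtain ⟨a, rfl | rfl⟩ := hx
    · exact ⟨-a, .inl (zpow_neg r a).symm⟩
    · refine ⟨k * -a, .inr ?_⟩
      rw [mul_inv_rev, inv_eq_of_mul_eq_one_right hs, ← zpow_neg, hsa]

lemma zpow_mul_sq (hs : s * s = 1) (hsrs : s * r * s = r ^ k) (a : ℤ) :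
    (r ^ a * s) ^ 2 = r ^ (a * (1 + k)) := by
  rw [sq, mul_assoc, ← mul_assoc s, mul_zpow_eq_zpow_mul hs hsrs, mul_assoc, hs,
    mul_one, ← zpow_add]
  ring_nf

lemma zpow_mul_pow_four_eq_one (hs : s * s = 1) (hsrs : s * r * s = r ^ k)
    (hr : orderOf r = 2 ^ n) (hk : 2 ^ n ∣ 2 * (k + 1)) (a : ℤ) : (r ^ a * s) ^ 4 = 1 := by
  rw [show 4 = 2 * 2 from rfl, pow_mul, zpow_mul_sq hs hsrs, ← zpow_natCast, ← zpow_mul,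
    ← orderOf_dvd_iff_zpow_eq_one, hr]
  have hk' : ((2 ^ n : ℕ) : ℤ) ∣ 2 * (k + 1) := by exact_mod_cast hk
  exact hk'.trans ⟨a, by ring⟩

lemma mem_zpowers_of_not_orderOf_dvd_four (hgen : closure {r, s} = ⊤) (hs : s * s = 1)
    (hsrs : s * r * s = r ^ k) (hr : orderOf r = 2 ^ n) (hk : 2 ^ n ∣ 2 * (k + 1)) {g : G}
    (hg : ¬ orderOf g ∣ 4) : g ∈ zpowers r := by
  obtain ⟨a, rfl | rfl⟩ := exists_eq_zpow_or_eq_zpow_mul hgen hs hsrs g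
  · exact zpow_mem_zpowers r a
  · exact absurd (orderOf_dvd_of_pow_eq_one (zpow_mul_pow_four_eq_one hs hsrs hr hk a)) hg

lemma exists_apply_eq_zpow_mul (hgen : closure {r, s} = ⊤) (hs : s * s = 1)
    (hsrs : s * r * s = r ^ k) (hsr : s ∉ zpowers r) {ψ : MulAut G} (hψ : ψ r = r) :
    ∃ u : ℤ, ψ s = r ^ u * s := by
  obtain ⟨u, h | h⟩ := exists_eq_zpow_or_eq_zpow_mul hgen hs hsrs (ψ s)
  · rw [← hψ, ← map_zpow] at h
    exact absurd ⟨u, (ψ.injective h).symm⟩ hsr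
  · exact ⟨u, h⟩

lemma pow_two_pow_eq_one_of_apply_eq_self (hgen : closure {r, s} = ⊤) (hs : s * s = 1)
    (hsrs : s * r * s = r ^ k) (hr : orderOf r = 2 ^ n) (hsr : s ∉ zpowers r) {ψ : MulAut G}
    (hψ : ψ r = r) : ψ ^ 2 ^ n = 1 := by
  obtain ⟨u, hu⟩ := exists_apply_eq_zpow_mul hgen hs hsrs hsr hψ
  have hpow_r (t : ℕ) : (ψ ^ t) r = r := by
    induction t with
    | zero => rfl
    | succ t ih => rw [pow_succ, MulAut.mul_apply, hψ, ih]
  have hpow_s (t : ℕ) : (ψ ^ t) s = r ^ (t * u) * s := by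
    induction t with
    | zero => simp
    | succ t ih =>
      rw [pow_succ, MulAut.mul_apply, hu, map_mul, map_zpow, hpow_r, ih, ← mul_assoc, ← zpow_add]
      congr 2
      push_cast
      ring
  refine MulAut.eq_one_of_forall_apply_eq_self hgen ?_
  rintro x (rfl | rfl)
  · exact hpow_r _
  · rw [hpow_s, zpow_mul, zpow_natCast, ← hr, pow_orderOf_eq_one, one_zpow, one_mul]

theorem isPGroup_two_mulAut_of_dihedral_type (hgen : closure {r, s} = ⊤) (hs : s * s = 1)
    (hsrs : s * r * s = r ^ k) (hr : orderOf r = 2 ^ n) (hn : 3 ≤ n) (hk : 2 ^ n ∣ 2 * (k + 1))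
    (hsr : s ∉ zpowers r) : IsPGroup 2 (MulAut G) := by
  intro φ
  have hφr : ¬ orderOf (φ r) ∣ 4 := by
    rw [MulEquiv.orderOf_eq, hr, show 4 = 2 ^ 2 from rfl,
      Nat.pow_dvd_pow_iff_le_right one_lt_two]
    omega
  obtain ⟨i, hi⟩ := (orderOf_pos_iff.1 (hr ▸ by positivity)).mem_powers_iff_mem_zpowers.2
    (mem_zpowers_of_not_orderOf_dvd_four hgen hs hsrs hr hk hφr)
  have hfix : (φ ^ 2 ^ (n - 1)) r = r := by
    simpa [hr, Nat.totient_prime_pow Nat.prime_two (by omega : 0 < n)] using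
      MulAut.pow_totient_orderOf_apply φ hi.symm
  exact ⟨n - 1 + n, by
    rw [pow_add, pow_mul, pow_two_pow_eq_one_of_apply_eq_self hgen hs hsrs hr hsr hfix]⟩

end DihedralType

namespace SemidihedralGroup

variable {m : ℕ}

def r (m : ℕ) : SemidihedralGroup m := PresentedGroup.of 0

def s (m : ℕ) : SemidihedralGroup m := PresentedGroup.of 1

lemma closure_r_s : closure {r m, s m} = ⊤ := by
  have h := PresentedGroup.closure_range_of (semidihedralRels m)
  have hrange : Set.range (PresentedGroup.of (rels := semidihedralRels m)) = {r m, s m} := by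
    ext g
    simp only [Set.mem_range, eq_comm, Fin.exists_fin_two, Fin.isValue, r, s]
    rfl
  rw [hrange] at h
  exact h

lemma r_pow_eq_one : r m ^ 2 ^ (m - 1) = 1 := by
  have h := PresentedGroup.one_of_mem (show _ ∈ semidihedralRels m from .inl rfl)
  rw [map_pow] at h
  exact h

lemma s_mul_s : s m * s m = 1 := by
  have h := PresentedGroup.one_of_mem (show _ ∈ semidihedralRels m from .inr (.inl rfl))
  rw [map_pow, sq] at h
  exact h

lemma s_mul_r_mul_s : s m * r m * s m = r m ^ (2 ^ (m - 2) - 1) := by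
  have h := PresentedGroup.one_of_mem (show _ ∈ semidihedralRels m from .inr (.inr rfl))
  rw [map_mul, map_mul, map_mul, map_pow, map_inv, inv_pow, mul_inv_eq_one] at h
  exact h

def twist (m : ℕ) : ZMod (2 ^ (m - 1)) := ((2 ^ (m - 2) - 1 : ℕ) : ZMod (2 ^ (m - 1)))

lemma twist_mul_twist (hm : 3 ≤ m) : twist m * twist m = 1 := by
  obtain ⟨n, rfl⟩ : ∃ n, m = n + 3 := ⟨m - 3, by omega⟩
  have hzero : (2 : ZMod (2 ^ (n + 2))) ^ (n + 2) = 0 := by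
    exact_mod_cast ZMod.natCast_self (2 ^ (n + 2))
  simp only [twist, show n + 3 - 2 = n + 1 by omega,
    Nat.cast_sub Nat.one_le_two_pow, Nat.cast_pow, Nat.cast_ofNat, Nat.cast_one]
  linear_combination (2 ^ n - 1 : ZMod (2 ^ (n + 2))) * hzero

def twistPerm (hm : 3 ≤ m) : Equiv.Perm (ZMod (2 ^ (m - 1))) :=
  Function.Involutive.toPerm (twist m * ·) fun x => by
    simp only [← mul_assoc, twist_mul_twist hm, one_mul]

@[simp]
lemma twistPerm_apply (hm : 3 ≤ m) (x : ZMod (2 ^ (m - 1))) : twistPerm hm x = twist m * x := rfl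

def toPerm (hm : 3 ≤ m) : SemidihedralGroup m →* Equiv.Perm (ZMod (2 ^ (m - 1))) :=
  PresentedGroup.toGroup (f := ![Equiv.addRight 1, twistPerm hm]) <| by
    rintro w (rfl | rfl | rfl)
    · ext x
      simp
    · ext x
      simp [sq, ← mul_assoc, twist_mul_twist hm]
    · simp only [map_mul, map_pow, map_inv, FreeGroup.lift_apply_of, inv_pow, mul_inv_eq_one]
      ext x
      simp only [Fin.isValue, Matrix.cons_val_one, Matrix.cons_val_fin_one, Matrix.cons_val_zero,
        Equiv.Perm.coe_mul, Equiv.coe_addRight, Function.comp_apply, twistPerm_apply,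
        Equiv.nsmul_addRight, nsmul_eq_mul, mul_one]
      rw [mul_add, ← mul_assoc, twist_mul_twist hm, one_mul, mul_one]
      rfl

lemma toPerm_r (hm : 3 ≤ m) : toPerm hm (r m) = Equiv.addRight 1 :=
  PresentedGroup.toGroup.of _

lemma toPerm_r_pow_apply_zero (hm : 3 ≤ m) (t : ℕ) : toPerm hm (r m ^ t) 0 = t := by
  simp [toPerm_r]

lemma orderOf_r (hm : 3 ≤ m) : orderOf (r m) = 2 ^ (m - 1) := by
  have hne : ¬ r m ^ 2 ^ (m - 2) = 1 := by
    intro h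
    have h0 := toPerm_r_pow_apply_zero hm (2 ^ (m - 2))
    rw [h, map_one, Equiv.Perm.one_apply, eq_comm, ZMod.natCast_eq_zero_iff,
      Nat.pow_dvd_pow_iff_le_right one_lt_two] at h0
    omega
  have hexp : m - 2 + 1 = m - 1 := by omega
  have h := orderOf_eq_prime_pow hne (by rw [hexp]; exact r_pow_eq_one)
  rwa [hexp] at h

lemma s_notMem_zpowers_r (hm : 4 ≤ m) : s m ∉ zpowers (r m) := by
  intro h
  obtain ⟨a, ha⟩ := mem_zpowers_iff.1 h
  have hcomm : Commute (s m) (r m) := ha ▸ (Commute.refl (r m)).zpow_left a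
  have h1 : r m ^ (2 ^ (m - 2) - 1) = r m ^ 1 := by
    rw [← s_mul_r_mul_s, hcomm.eq, mul_assoc, s_mul_s, mul_one, pow_one]
  rw [pow_eq_pow_iff_modEq, orderOf_r (by omega)] at h1
  have h2 : 2 ^ (m - 1) = 2 * 2 ^ (m - 2) := by rw [← pow_succ']; congr 1; omega
  have h4 : 2 ^ 2 ≤ 2 ^ (m - 2) := Nat.pow_le_pow_right two_pos (by omega)
  rw [Nat.ModEq, Nat.mod_eq_of_lt (by omega), Nat.mod_eq_of_lt (by omega)] at h1
  omega

end SemidihedralGroup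

/-- For m ≥ 4, the automorphism group of SD_{2^m} is a 2-group. -/
theorem stmt_10 (m : ℕ) (hm : 4 ≤ m) :
    IsPGroup 2 (MulAut (SemidihedralGroup m)) := by
  refine isPGroup_two_mulAut_of_dihedral_type SemidihedralGroup.closure_r_s
    SemidihedralGroup.s_mul_s SemidihedralGroup.s_mul_r_mul_s
    (SemidihedralGroup.orderOf_r (by omega)) (by omega : 3 ≤ m - 1) ?_
    (SemidihedralGroup.s_notMem_zpowers_r hm)
  rw [Nat.sub_add_cancel Nat.one_le_two_pow, ← pow_succ', show m - 2 + 1 = m - 1 by omega]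
end

section
/- Let G be a finite group and N ⊴ G a normal subgroup with G/N cyclic. If N is perfect and the Schur multiplier of N is trivial, then the Schur multiplier of G is trivial. -/
/-!
Write `H²(G, ℂˣ) = 0` as "every 2-cocycle `f : G → G → ℂˣ` is a coboundary". Since `f` is a
coboundary on `N`, it may be changed by a coboundary so as to be `1` on `N × N`. In the central
extension `E = ℂˣ ×_f G` the map `i : n ↦ (1, n)` is then a homomorphism `N → E`; conjugation by
`x ∈ E` changes `i` only by a central character of `N`, which is trivial as `N` is perfect, so
`i N` is normal. Lift a generator of the cyclic group `G ⧸ N` of order `m` to `y ∈ E`; because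
`ℂˣ` is divisible, `y` can be rescaled by a central element so that `y ^ m ∈ i N`. Then
`i N ⊔ ⟨y⟩` maps isomorphically onto `G`, so the extension splits and `f` is a coboundary.
-/

open Subgroup

open scoped IsMulCommutative in
theorem MonoidHom.eq_of_perfect_of_mul_inv_mem_center {N E : Type*} [Group N] [Group E]
    (hN : commutator N = ⊤) {φ ψ : N →* E} (h : ∀ n, φ n * (ψ n)⁻¹ ∈ center E) : φ = ψ := by
  let χ : N →* center E :=
    { toFun n := ⟨φ n * (ψ n)⁻¹, h n⟩
      map_one' := by ext; simp
      map_mul' n m := by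
        have hm := mem_center_iff.1 (h m) (ψ n)⁻¹
        ext
        simp only [map_mul, mul_inv_rev, coe_mul, mul_assoc] at hm ⊢
        rw [hm] }
  ext n
  have hn : n ∈ commutator N := hN ▸ mem_top n
  have : χ n = 1 := Abelianization.commutator_subset_ker χ hn
  exact mul_inv_eq_one.1 (congrArg Subtype.val this)

theorem MonoidHom.normal_range_of_perfect {E G : Type*} [Group E] [Group G] (π : E →* G)
    (hπ : π.ker ≤ center E) {N : Subgroup G} [N.Normal] (hN : commutator N = ⊤) (i : N →* E)
    (hi : ∀ n, π (i n) = n) : i.range.Normal := by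
  constructor
  rintro _ ⟨n, rfl⟩ x
  have : (MulAut.conj x).toMonoidHom.comp i = i.comp (MulAut.conjNormal (π x)).toMonoidHom :=
    eq_of_perfect_of_mul_inv_mem_center hN fun n ↦ hπ (by simp [hi, MulAut.conjNormal_apply])
  exact ⟨_, (DFunLike.congr_fun this n).symm⟩

theorem MonoidHom.exists_section_of_isCyclic_quotient {E G : Type*} [Group E] [Group G]
    (π : E →* G) {N : Subgroup G} [N.Normal] (i : N →* E) (hi : ∀ n, π (i n) = n)
    [i.range.Normal] (y : E) (hy : ∀ q : G ⧸ N, q ∈ zpowers (π y : G ⧸ N))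
    (hym : y ^ orderOf (π y : G ⧸ N) ∈ i.range) : ∃ s : G →* E, ∀ g, π (s g) = g := by
  set K := i.range ⊔ zpowers y
  have hsurj : Function.Surjective (π.domRestrict K) := by
    intro g
    obtain ⟨k, hk⟩ := mem_zpowers_iff.1 (hy g)
    have hn : (π y ^ k)⁻¹ * g ∈ N := by
      rw [← QuotientGroup.eq, QuotientGroup.mk_zpow, hk]
    refine ⟨⟨y ^ k * i ⟨_, hn⟩, mul_mem (mem_sup_right (zpow_mem (mem_zpowers y) k))
      (mem_sup_left ⟨_, rfl⟩)⟩, ?_⟩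
    simp [hi]
  have hinj : Function.Injective (π.domRestrict K) := by
    rw [injective_iff_map_eq_one]
    rintro ⟨w, hw⟩ hw1
    obtain ⟨_, ⟨n, rfl⟩, z, hz, rfl⟩ := mem_sup_of_normal_left.1 hw
    obtain ⟨k, rfl⟩ := mem_zpowers_iff.1 hz
    replace hw1 : (n : G) * π y ^ k = 1 := by simpa [hi] using hw1
    have hk : (π y : G ⧸ N) ^ k = 1 := by
      rw [← QuotientGroup.mk_zpow, QuotientGroup.eq_one_iff, eq_inv_of_mul_eq_one_right hw1]
      exact inv_mem n.2
    obtain ⟨d, rfl⟩ := orderOf_dvd_iff_zpow_eq_one.2 hk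
    obtain ⟨n', hn'⟩ : y ^ (orderOf (π y : G ⧸ N) * d) ∈ i.range := by
      rw [zpow_mul, zpow_natCast]
      exact zpow_mem hym d
    have hnn' : n * n' = 1 := Subtype.ext <| by simpa [← hi n', hn'] using hw1
    apply Subtype.ext
    simp [← hn', ← map_mul, hnn']
  let e := MulEquiv.ofBijective (π.domRestrict K) ⟨hinj, hsurj⟩
  exact ⟨K.subtype.comp e.symm.toMonoidHom, e.apply_symm_apply⟩

namespace SchurMultiplier

variable {G A : Type*} [Group G] [CommGroup A]

-- `groupCohomology.IsMulCocycle₂` for the trivial action, curried; Mathlib's version needs a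
-- `MulAction G A` instance, which a trivial action does not have.
def IsCocycle (f : G → G → A) : Prop :=
  ∀ g h k, f (g * h) k * f g h = f h k * f g (h * k)

def coboundary (x : G → A) (g h : G) : A :=
  x h / x (g * h) * x g

def IsCoboundary (f : G → G → A) : Prop :=
  ∃ x : G → A, coboundary x = f

theorem isCocycle_coboundary (x : G → A) : IsCocycle (coboundary x) := by
  intro g h k
  simp only [coboundary, div_eq_mul_inv, mul_comm, mul_left_comm, mul_assoc, mul_inv_cancel_left]

theorem coboundary_mul (x y : G → A) : coboundary (x * y) = coboundary x * coboundary y := by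
  ext g h
  simp only [coboundary, Pi.mul_apply, div_eq_mul_inv, mul_inv_rev, mul_comm, mul_left_comm,
    mul_assoc]

theorem IsCocycle.div {f f' : G → G → A} (hf : IsCocycle f) (hf' : IsCocycle f') :
    IsCocycle (f / f') := by
  intro g h k
  simp only [Pi.div_apply]
  rw [div_mul_div_comm, div_mul_div_comm, hf, hf']

theorem IsCocycle.restrict {f : G → G → A} (hf : IsCocycle f) (H : Subgroup G) :
    IsCocycle fun a b : H ↦ f a b :=
  fun a b c ↦ hf a b c

theorem IsCocycle.map_one_left {f : G → G → A} (hf : IsCocycle f) (h₁ : f 1 1 = 1) (g : G) :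
    f 1 g = 1 := by
  simpa [h₁] using hf 1 1 g

theorem IsCocycle.map_one_right {f : G → G → A} (hf : IsCocycle f) (h₁ : f 1 1 = 1) (g : G) :
    f g 1 = 1 := by
  simpa [h₁] using (hf g 1 1).symm

theorem exists_coboundary_eq_of_isCoboundary_restrict {f : G → G → A} (H : Subgroup G)
    (hH : IsCoboundary fun a b : H ↦ f a b) : ∃ x : G → A, ∀ a b : H, coboundary x a b = f a b := by
  obtain ⟨x, hx⟩ := hH
  refine ⟨Function.extend Subtype.val x 1, fun a b ↦ ?_⟩
  simp only [coboundary, ← Subgroup.coe_mul, Subtype.val_injective.extend_apply]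
  exact congrFun (congrFun hx a) b

theorem subsingleton_H2_iff {G A : Type} [Group G] [CommGroup A] :
    Subsingleton (groupCohomology (Rep.trivial ℤ G (Additive A)) 2) ↔
      ∀ f : G → G → A, IsCocycle f → IsCoboundary f := by
  constructor
  · intro hs f hf
    have hmem : (fun p : G × G ↦ Additive.ofMul (f p.1 p.2))
        ∈ groupCohomology.cocycles₂ (Rep.trivial ℤ G (Additive A)) :=
      (groupCohomology.mem_cocycles₂_iff _).2 hf
    obtain ⟨x, hx⟩ := (groupCohomology.H2π_eq_zero_iff ⟨_, hmem⟩).1 (Subsingleton.elim _ _)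
    exact ⟨fun g ↦ (x g).toMul, funext₂ fun g h ↦ congrFun hx (g, h)⟩
  · intro h
    suffices ∀ c : groupCohomology.H2 (Rep.trivial ℤ G (Additive A)), c = 0 from
      ⟨fun a b ↦ (this a).trans (this b).symm⟩
    intro c
    induction c using groupCohomology.H2_induction_on with | h c => ?_
    rw [groupCohomology.H2π_eq_zero_iff]
    obtain ⟨x, hx⟩ := h (fun g h ↦ (c (g, h)).toMul) ((groupCohomology.mem_cocycles₂_iff _).1 c.2)
    exact ⟨fun g ↦ Additive.ofMul (x g), funext fun p ↦ congrFun₂ hx p.1 p.2⟩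

structure NormalizedCocycle (G A : Type*) [Group G] [CommGroup A] where
  toFun : G → G → A
  isCocycle : IsCocycle toFun
  map_one_one : toFun 1 1 = 1

namespace NormalizedCocycle

instance : CoeFun (NormalizedCocycle G A) fun _ ↦ G → G → A := ⟨toFun⟩

@[ext]
structure Extension (c : NormalizedCocycle G A) where
  fiber : A
  base : G

variable (c : NormalizedCocycle G A)

theorem map_one_left (g : G) : c 1 g = 1 := c.isCocycle.map_one_left c.map_one_one g

theorem map_one_right (g : G) : c g 1 = 1 := c.isCocycle.map_one_right c.map_one_one g

namespace Extension

variable {c}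

instance : Mul c.Extension := ⟨fun x y ↦ ⟨x.fiber * y.fiber * c x.base y.base, x.base * y.base⟩⟩
instance : One c.Extension := ⟨⟨1, 1⟩⟩
instance : Inv c.Extension := ⟨fun x ↦ ⟨(x.fiber * c x.base⁻¹ x.base)⁻¹, x.base⁻¹⟩⟩

@[simp] theorem fiber_mul (x y : c.Extension) :
    (x * y).fiber = x.fiber * y.fiber * c x.base y.base := rfl
@[simp] theorem base_mul (x y : c.Extension) : (x * y).base = x.base * y.base := rfl
@[simp] theorem fiber_one : (1 : c.Extension).fiber = 1 := rfl
@[simp] theorem base_one : (1 : c.Extension).base = 1 := rfl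

instance : Group c.Extension := .ofLeftAxioms
  (fun x y z ↦ by
    ext
    · have := c.isCocycle x.base y.base z.base
      simp only [fiber_mul, base_mul]
      calc _ = x.fiber * y.fiber * z.fiber * (c (x.base * y.base) z.base * c x.base y.base) := by
            ac_rfl
        _ = _ := by rw [this]; ac_rfl
    · exact mul_assoc _ _ _)
  (fun x ↦ by ext <;> simp [c.map_one_left])
  (fun x ↦ by ext <;> simp [Inv.inv])

def proj : c.Extension →* G where
  toFun := base
  map_one' := rfl
  map_mul' _ _ := rfl

@[simp] theorem proj_apply (x : c.Extension) : proj x = x.base := rfl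

def incl : A →* c.Extension where
  toFun a := ⟨a, 1⟩
  map_one' := rfl
  map_mul' a b := by ext <;> simp [c.map_one_left]

@[simp] theorem fiber_incl (a : A) : (incl a : c.Extension).fiber = a := rfl
@[simp] theorem base_incl (a : A) : (incl a : c.Extension).base = 1 := rfl

theorem incl_mem_center (a : A) : (incl a : c.Extension) ∈ center c.Extension :=
  mem_center_iff.2 fun x ↦ by ext <;> simp [c.map_one_left, c.map_one_right, mul_comm]

theorem ker_proj_le_center : (proj : c.Extension →* G).ker ≤ center c.Extension := by
  intro x hx
  convert incl_mem_center x.fiber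
  ext
  · rfl
  · exact hx

variable (N : Subgroup G) (hN : ∀ a b : N, c a b = 1)

def ofTrivialOn : N →* c.Extension where
  toFun n := ⟨1, n⟩
  map_one' := rfl
  map_mul' a b := by ext <;> simp [hN]

theorem proj_ofTrivialOn (n : N) : proj (ofTrivialOn N hN n) = n := rfl

theorem incl_mul_ofTrivialOn (a : A) (n : N) : incl a * ofTrivialOn N hN n = ⟨a, n⟩ := by
  ext <;> simp [ofTrivialOn, c.map_one_left]

theorem exists_pow_mem_range_ofTrivialOn (hroot : ∀ (a : A) (m : ℕ), 0 < m → ∃ b, b ^ m = a)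
    (x : c.Extension) {m : ℕ} (hx : x.base ^ m ∈ N) :
    ∃ y : c.Extension, y.base = x.base ∧ y ^ m ∈ (ofTrivialOn N hN).range := by
  obtain rfl | hm := Nat.eq_zero_or_pos m
  · exact ⟨x, rfl, by simp [one_mem]⟩
  obtain ⟨b, hb⟩ := hroot (x ^ m).fiber m hm
  have hcomm : Commute (incl b⁻¹) x := (mem_center_iff.1 (incl_mem_center _) x).symm
  refine ⟨incl b⁻¹ * x, one_mul x.base, ⟨⟨_, hx⟩, ?_⟩⟩
  rw [hcomm.mul_pow, ← map_pow, inv_pow, hb, map_inv, eq_inv_mul_iff_mul_eq,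
    incl_mul_ofTrivialOn]
  exact Extension.ext rfl (map_pow proj x m).symm

end Extension

theorem isCoboundary_of_section (s : G →* c.Extension) (hs : ∀ g, (s g).base = g) :
    IsCoboundary c := by
  have key : ∀ g h, (s g).fiber * (s h).fiber * c g h = (s (g * h)).fiber := fun g h ↦ by
    rw [map_mul, Extension.fiber_mul, hs, hs]
  refine ⟨fun g ↦ (s g).fiber⁻¹, funext₂ fun g h ↦ ?_⟩
  rw [coboundary, ← key, div_inv_eq_mul]
  simp [mul_assoc, mul_comm]

end NormalizedCocycle

open NormalizedCocycle.Extension in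
theorem IsCocycle.isCoboundary_of_restrict_eq_one {f : G → G → A} (hf : IsCocycle f)
    {N : Subgroup G} [N.Normal] (hcyc : IsCyclic (G ⧸ N)) (hperf : commutator N = ⊤)
    (hroot : ∀ (a : A) (m : ℕ), 0 < m → ∃ b, b ^ m = a) (hN : ∀ a b : N, f a b = 1) :
    IsCoboundary f := by
  let c : NormalizedCocycle G A := ⟨f, hf, hN 1 1⟩
  obtain ⟨q, hq⟩ := hcyc.exists_generator
  obtain ⟨g, rfl⟩ := QuotientGroup.mk_surjective q
  have hg : g ^ orderOf (g : G ⧸ N) ∈ N := by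
    rw [← QuotientGroup.eq_one_iff, QuotientGroup.mk_pow, pow_orderOf_eq_one]
  obtain ⟨y, hy, hym⟩ := exists_pow_mem_range_ofTrivialOn N hN hroot (⟨1, g⟩ : c.Extension) hg
  have := proj.normal_range_of_perfect ker_proj_le_center hperf _ (proj_ofTrivialOn (c := c) N hN)
  obtain ⟨s, hs⟩ := proj.exists_section_of_isCyclic_quotient _ (proj_ofTrivialOn (c := c) N hN) y
    (by simpa [hy]) (by rwa [proj_apply, hy])
  exact c.isCoboundary_of_section s hs

end SchurMultiplier

theorem IsAlgClosed.exists_units_pow_eq {k : Type*} [Field k] [IsAlgClosed k] (a : kˣ) {n : ℕ}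
    (hn : 0 < n) : ∃ b : kˣ, b ^ n = a := by
  obtain ⟨z, hz⟩ := exists_pow_nat_eq (a : k) hn
  have hz0 : z ≠ 0 := by
    rintro rfl
    exact a.ne_zero (by rw [← hz, zero_pow hn.ne'])
  exact ⟨Units.mk0 z hz0, Units.ext (by simpa using hz)⟩

open SchurMultiplier

theorem stmt_11_general (G : Type) [Group G] (N : Subgroup G) [N.Normal]
    (hcyc : IsCyclic (G ⧸ N))
    (hperf : ⁅(⊤ : Subgroup N), (⊤ : Subgroup N)⁆ = (⊤ : Subgroup N))
    (hN : Subsingleton (groupCohomology (Rep.trivial ℤ N (Additive ℂˣ)) 2)) :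
    Subsingleton (groupCohomology (Rep.trivial ℤ G (Additive ℂˣ)) 2) := by
  refine subsingleton_H2_iff.2 fun f hf ↦ ?_
  obtain ⟨x, hx⟩ := exists_coboundary_eq_of_isCoboundary_restrict N
    (subsingleton_H2_iff.1 hN _ (hf.restrict N))
  obtain ⟨y, hy⟩ := (hf.div (isCocycle_coboundary x)).isCoboundary_of_restrict_eq_one hcyc hperf
    (fun a _ hm ↦ IsAlgClosed.exists_units_pow_eq a hm) (fun a b ↦ by simp [hx])
  exact ⟨y * x, by rw [coboundary_mul, hy, div_mul_cancel]⟩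

/-- If N ⊴ G with G/N cyclic, N perfect and the Schur multiplier
H²(N, ℂ^×) of N trivial, then the Schur multiplier H²(G, ℂ^×) of G is trivial. -/
theorem stmt_11 (G : Type) [Group G] [Finite G] (N : Subgroup G) [N.Normal]
    (hcyc : IsCyclic (G ⧸ N))
    (hperf : ⁅(⊤ : Subgroup N), (⊤ : Subgroup N)⁆ = (⊤ : Subgroup N))
    (hN : Subsingleton (groupCohomology (Rep.trivial ℤ N (Additive ℂˣ)) 2)) :
    Subsingleton (groupCohomology (Rep.trivial ℤ G (Additive ℂˣ)) 2) :=
  stmt_11_general G N hcyc hperf hN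
end
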